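/- Let F be a field, G a finite group, and V a non-trivial G-module (i.e., the G-action on V is not the trivial action). Then the dimension of the vector coinvariants grows unboundedly: lim_{m→∞} dim_F F[V^m]_G = ∞. -/

import Mathlib

open MvPolynomial

variable {F G ι : Type*} [Field F] [Group G] [Fintype ι] [DecidableEq ι]

/-- The (left) action of a group element `σ` on the polynomial algebra
`F[V] = S(V^*)` presented as `MvPolynomial ι F`, for a matrix representation
`ρ : G →* GL(ι, F)` of `G` on `V = (ι → F)`.  It is given by `σ • f = f ∘ σ⁻¹`,
i.e. by linear substitution of the variables using the matrix of `ρ σ⁻¹`. -/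
noncomputable def polyAct (ρ : G →* (Matrix ι ι F)ˣ) (σ : G)
    (f : MvPolynomial ι F) : MvPolynomial ι F :=
  MvPolynomial.aeval
    (fun i => ∑ j, ((ρ σ⁻¹ : Matrix ι ι F) i j) • (MvPolynomial.X j : MvPolynomial ι F)) f

/-- A polynomial is invariant if it is fixed by the action of every group element. -/
def IsInv (ρ : G →* (Matrix ι ι F)ˣ) (f : MvPolynomial ι F) : Prop :=
  ∀ σ : G, polyAct ρ σ f = f

/-- The Hilbert ideal: the ideal of `F[V]` generated by the homogeneous invariants
of positive degree. -/
noncomputable def hilbertIdeal (ρ : G →* (Matrix ι ι F)ˣ) : Ideal (MvPolynomial ι F) :=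
  Ideal.span {f : MvPolynomial ι F | (∃ d, 0 < d ∧ f.IsHomogeneous d) ∧ IsInv ρ f}

/-- The top degree of the coinvariant algebra `F[V]_G = F[V]/(Hilbert ideal)`:
the largest degree `d` such that the degree-`d` homogeneous component of `F[V]_G`
is nonzero; since the Hilbert ideal is homogeneous this is the largest `d` for
which some homogeneous polynomial of degree `d` is not in the Hilbert ideal. -/
noncomputable def topDeg (ρ : G →* (Matrix ι ι F)ˣ) : ℕ :=
  sSup {d : ℕ | ∃ f : MvPolynomial ι F, f.IsHomogeneous d ∧ f ∉ hilbertIdeal ρ}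

/-- The dimension of the coinvariant algebra `F[V]_G` as an `F`-vector space. -/
noncomputable def coinvDim (ρ : G →* (Matrix ι ι F)ˣ) : ℕ :=
  Module.finrank F (MvPolynomial ι F ⧸ hilbertIdeal ρ)

/-- The representation of `G` on the direct sum `V^m` of `m` copies of `V`,
given by block diagonal matrices. -/
noncomputable def glPow (ρ : G →* (Matrix ι ι F)ˣ) (m : ℕ) :
    G →* (Matrix (ι × Fin m) (ι × Fin m) F)ˣ :=
  (Units.map (Matrix.blockDiagonalRingHom ι (Fin m) F).toMonoidHom).comp
    ((Units.map (Pi.constRingHom (Fin m) (Matrix ι ι F)).toMonoidHom).comp ρ)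

/-!
The Hilbert ideal `H` has finite codimension: for a linear form `x`, the polynomial
`∏_σ (T + σ(-x))` is monic of degree `|G|`, vanishes at `x`, and its lower coefficients are
homogeneous invariants of positive degree, so `x ^ |G| ∈ H` and `F[V]/H` is generated by
nilpotents.

On the other hand, for every `σ` the ideal `H` is contained in the ideal of polynomials
vanishing at `0` whose differential at `0` is fixed by `ρ σ`; this is seen by evaluating at
first-order points `ε • v` over the dual numbers. If `u ᵥ* ρ σ ≠ u`, the copies of the linear
form `u` in the `m` summands of `V^m` are therefore, together with `1`, linearly independent
modulo `H`, so that `dim F[V^m]_G ≥ m + 1`.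
-/

open Matrix

section Action

variable (ρ : G →* (Matrix ι ι F)ˣ)

noncomputable def polyActHom (σ : G) : MvPolynomial ι F →ₐ[F] MvPolynomial ι F :=
  aeval fun i => ∑ j, (ρ σ⁻¹ : Matrix ι ι F) i j • X j

lemma polyActHom_apply (σ : G) (f : MvPolynomial ι F) : polyActHom ρ σ f = polyAct ρ σ f := rfl

lemma polyActHom_one : polyActHom ρ 1 = AlgHom.id F (MvPolynomial ι F) :=
  algHom_ext fun i => by simp [polyActHom, one_apply]

lemma polyActHom_mul (σ τ : G) :
    polyActHom ρ (σ * τ) = (polyActHom ρ σ).comp (polyActHom ρ τ) := by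
  refine algHom_ext fun i => ?_
  simp only [polyActHom, AlgHom.comp_apply, aeval_X, map_sum, map_smul, Finset.smul_sum, smul_smul,
    _root_.mul_inv_rev, map_mul, Units.val_mul, mul_apply, Finset.sum_smul]
  exact Finset.sum_comm

lemma polyAct_one (f : MvPolynomial ι F) : polyAct ρ 1 f = f := by
  rw [← polyActHom_apply, polyActHom_one, AlgHom.id_apply]

lemma polyAct_polyAct (σ τ : G) (f : MvPolynomial ι F) :
    polyAct ρ σ (polyAct ρ τ f) = polyAct ρ (σ * τ) f := by
  simp only [← polyActHom_apply, polyActHom_mul, AlgHom.comp_apply]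

lemma MvPolynomial.IsHomogeneous.polyAct {f : MvPolynomial ι F} {d : ℕ} (hf : f.IsHomogeneous d)
    (σ : G) :
    (polyAct ρ σ f).IsHomogeneous d := by
  have hX (i : ι) : (∑ j, (ρ σ⁻¹ : Matrix ι ι F) i j • (X j : MvPolynomial ι F)).IsHomogeneous 1 :=
    IsHomogeneous.sum _ _ _ fun j _ => by simpa [smul_eq_C_mul] using isHomogeneous_C_mul_X _ j
  rw [← one_mul d]
  exact hf.aeval _ hX

end Action

section Finiteness

variable [Fintype G] (ρ : G →* (Matrix ι ι F)ˣ)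

-- `T + σ f` rather than `T - σ f`, to match `Finset.prod_X_add_C_coeff`.
noncomputable def orbitPoly (f : MvPolynomial ι F) : Polynomial (MvPolynomial ι F) :=
  ∏ σ : G, (Polynomial.X + Polynomial.C (polyAct ρ σ f))

lemma orbitPoly_monic (f : MvPolynomial ι F) : (orbitPoly ρ f).Monic :=
  Polynomial.monic_prod_of_monic _ _ fun _ _ => Polynomial.monic_X_add_C _

lemma natDegree_orbitPoly (f : MvPolynomial ι F) :
    (orbitPoly ρ f).natDegree = Fintype.card G := by
  rw [orbitPoly, Polynomial.natDegree_prod_of_monic _ _ fun _ _ => Polynomial.monic_X_add_C _]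
  simp

lemma eval_neg_orbitPoly (f : MvPolynomial ι F) : (orbitPoly ρ f).eval (-f) = 0 := by
  rw [orbitPoly, Polynomial.eval_prod]
  refine Finset.prod_eq_zero (Finset.mem_univ 1) ?_
  simp [polyAct_one]

lemma isInv_coeff_orbitPoly (f : MvPolynomial ι F) (k : ℕ) :
    IsInv ρ ((orbitPoly ρ f).coeff k) := by
  intro τ
  rw [← polyActHom_apply, ← AlgHom.coe_toRingHom, ← Polynomial.coeff_map]
  congr 1
  simp only [orbitPoly, Polynomial.map_prod, Polynomial.map_add, Polynomial.map_X, Polynomial.map_C,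
    AlgHom.coe_toRingHom, polyActHom_apply, polyAct_polyAct]
  exact Fintype.prod_equiv (Equiv.mulLeft τ) _ _ fun _ => rfl

lemma isHomogeneous_coeff_orbitPoly {f : MvPolynomial ι F} {d : ℕ} (hf : f.IsHomogeneous d)
    {k : ℕ} (hk : k ≤ Fintype.card G) :
    ((orbitPoly ρ f).coeff k).IsHomogeneous (d * (Fintype.card G - k)) := by
  rw [orbitPoly, Finset.prod_X_add_C_coeff _ _ (by simpa using hk)]
  refine IsHomogeneous.sum _ _ _ fun t ht => ?_
  have := IsHomogeneous.prod t _ (fun _ => d) fun σ _ => hf.polyAct ρ σ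
  simpa [(Finset.mem_powersetCard.1 ht).2, mul_comm] using this

lemma pow_card_mem_hilbertIdeal {f : MvPolynomial ι F} {d : ℕ} (hf : f.IsHomogeneous d)
    (hd : 0 < d) : f ^ Fintype.card G ∈ hilbertIdeal ρ := by
  have hcoeff (k : ℕ) (hk : k < Fintype.card G) : (orbitPoly ρ (-f)).coeff k ∈ hilbertIdeal ρ :=
    Ideal.subset_span ⟨⟨_, Nat.mul_pos hd (Nat.sub_pos_of_lt hk),
      isHomogeneous_coeff_orbitPoly ρ hf.neg hk.le⟩, isInv_coeff_orbitPoly ρ (-f) k⟩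
  have hroot := eval_neg_orbitPoly ρ (-f)
  rw [neg_neg, (orbitPoly_monic ρ (-f)).as_sum, natDegree_orbitPoly, Polynomial.eval_add,
    Polynomial.eval_pow, Polynomial.eval_X, ← eq_neg_iff_add_eq_zero] at hroot
  rw [hroot, Polynomial.eval_finsetSum]
  refine neg_mem (Ideal.sum_mem _ fun k hk => ?_)
  simpa using Ideal.mul_mem_right _ _ (hcoeff k (Finset.mem_range.1 hk))

theorem finiteDimensional_coinvariants :
    FiniteDimensional F (MvPolynomial ι F ⧸ hilbertIdeal ρ) := by
  set q := Ideal.Quotient.mkₐ F (hilbertIdeal ρ)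
  have hint : ∀ x ∈ Set.range (q ∘ X), IsIntegral F x := by
    rintro _ ⟨i, rfl⟩
    refine IsIntegral.of_pow (Fintype.card_pos (α := G)) ?_
    rw [Function.comp_apply, ← map_pow, Ideal.Quotient.mkₐ_eq_mk,
      Ideal.Quotient.eq_zero_iff_mem.2 (pow_card_mem_hilbertIdeal ρ (isHomogeneous_X F i) one_pos)]
    exact isIntegral_zero
  have hgen : Algebra.adjoin F (Set.range (q ∘ X)) = ⊤ := by
    rw [Set.range_comp, ← AlgHom.map_adjoin, adjoin_range_X, Algebra.map_top, AlgHom.range_eq_top]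
    exact Ideal.Quotient.mkₐ_surjective F _
  refine Module.finite_def.2 ?_
  rw [← Algebra.top_toSubmodule, ← hgen]
  exact fg_adjoin_of_finite (Set.finite_range _) hint

end Finiteness

section FirstOrder

open DualNumber TrivSqZeroExt

/-- Evaluation at the infinitesimal point `ε • v`: it records `f(0) + ε • (df)₀(v)`. -/
noncomputable def evalEps (v : ι → F) : MvPolynomial ι F →ₐ[F] DualNumber F :=
  aeval fun i => v i • eps

omit [Fintype ι] [DecidableEq ι] in
lemma fst_evalEps (v : ι → F) (f : MvPolynomial ι F) : (evalEps v f).fst = constantCoeff f := by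
  induction f using MvPolynomial.induction_on with
  | C a => simp [evalEps, algebraMap_eq_inl]
  | add p q hp hq => simp [hp, hq]
  | mul_X p i _ => simp [evalEps]

lemma evalEps_polyAct (ρ : G →* (Matrix ι ι F)ˣ) (σ : G) (v : ι → F) (f : MvPolynomial ι F) :
    evalEps v (polyAct ρ σ f) = evalEps ((ρ σ⁻¹ : Matrix ι ι F) *ᵥ v) f := by
  rw [← polyActHom_apply, ← AlgHom.comp_apply]
  congr 1
  refine algHom_ext fun i => ?_
  simp [evalEps, polyActHom, mulVec, dotProduct, Finset.sum_smul, smul_smul]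

lemma DualNumber.mul_eq_zero_of_fst_eq_zero {x y : DualNumber F} (hx : x.fst = 0)
    (hy : y.fst = 0) : x * y = 0 := by
  ext <;> simp [hx, hy]

omit [DecidableEq ι] in
/-- The polynomials vanishing at `0` whose differential at `0` is fixed by `M`. -/
noncomputable def fixedDifferentialIdeal (M : Matrix ι ι F) : Ideal (MvPolynomial ι F) where
  carrier := {f | constantCoeff f = 0 ∧ ∀ v, evalEps (M *ᵥ v) f = evalEps v f}
  zero_mem' := by simp
  add_mem' := by
    rintro f g ⟨hf₀, hf⟩ ⟨hg₀, hg⟩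
    exact ⟨by simp [hf₀, hg₀], fun v => by simp [hf, hg]⟩
  smul_mem' := by
    rintro g f ⟨hf₀, hf⟩
    refine ⟨by simp [hf₀], fun v => ?_⟩
    rw [smul_eq_mul, map_mul, map_mul, hf, ← sub_eq_zero, ← sub_mul]
    exact DualNumber.mul_eq_zero_of_fst_eq_zero (by simp [fst_evalEps]) (by simp [fst_evalEps, hf₀])

lemma hilbertIdeal_le_fixedDifferentialIdeal (ρ : G →* (Matrix ι ι F)ˣ) (σ : G) :
    hilbertIdeal ρ ≤ fixedDifferentialIdeal (ρ σ : Matrix ι ι F) := by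
  refine Ideal.span_le.2 ?_
  rintro f ⟨⟨d, hd, hf⟩, hinv⟩
  refine ⟨hf.coeff_eq_zero (by simpa using hd.ne), fun v => ?_⟩
  rw [← inv_inv σ, ← evalEps_polyAct, hinv]

lemma eq_zero_and_vecMul_eq_of_mem_fixedDifferentialIdeal {M : Matrix ι ι F} {c : F}
    {w : ι → F} (h : C c + ∑ i, w i • X i ∈ fixedDifferentialIdeal M) : c = 0 ∧ w ᵥ* M = w := by
  obtain ⟨h₀, h₁⟩ := h
  have hev (v : ι → F) : evalEps v (C c + ∑ i, w i • X i) = algebraMap F _ c + (w ⬝ᵥ v) • eps := by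
    simp [evalEps, dotProduct, Finset.sum_smul, smul_smul]
  refine ⟨by simpa using h₀, funext fun j => ?_⟩
  have := congrArg snd (h₁ (Pi.single j 1))
  simpa [hev, ← dotProduct_mulVec, vecMul, col_apply'] using this

end FirstOrder

section Powers

variable (ρ : G →* (Matrix ι ι F)ˣ)

lemma glPow_apply (m : ℕ) (σ : G) :
    (glPow ρ m σ : Matrix (ι × Fin m) (ι × Fin m) F) =
      blockDiagonal fun _ => (ρ σ : Matrix ι ι F) :=
  rfl

omit [DecidableEq ι] in
lemma vecMul_blockDiagonal_const {o : Type*} [Fintype o] [DecidableEq o] (M : Matrix ι ι F)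
    (x : o → F) (u : ι → F) :
    (fun p : ι × o => x p.2 * u p.1) ᵥ* blockDiagonal (fun _ => M) =
      fun p => x p.2 * (u ᵥ* M) p.1 := by
  ext ⟨b, l⟩
  simp [vecMul, dotProduct, Fintype.sum_prod_type, blockDiagonal_apply, Finset.mul_sum, mul_assoc]

lemma exists_vecMul_ne_self {M : Matrix ι ι F} (hM : M ≠ 1) : ∃ u : ι → F, u ᵥ* M ≠ u := by
  by_contra! h
  exact hM (ext_of_single_vecMul fun i => by rw [h, vecMul_one])

lemma linearIndependent_mkₐ_one_and_copies {σ : G} {u : ι → F} (hu : u ᵥ* (ρ σ : Matrix ι ι F) ≠ u)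
    (m : ℕ) :
    LinearIndependent F fun o : Option (Fin m) =>
      Ideal.Quotient.mkₐ F (hilbertIdeal (glPow ρ m)) (o.elim 1 fun k => ∑ i, u i • X (i, k)) := by
  rw [Fintype.linearIndependent_iff]
  intro g hg
  have hsum : ∑ o, g o • o.elim 1 (fun k => ∑ i, u i • X (i, k)) =
      C (g none) + ∑ p : ι × Fin m, (g (some p.2) * u p.1) • (X p : MvPolynomial _ F) := by
    simp [Fintype.sum_option, Fintype.sum_prod_type_right, Finset.smul_sum, smul_smul,
      C_eq_smul_one]
  have hmem : C (g none) + ∑ p : ι × Fin m, (g (some p.2) * u p.1) • X p ∈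
      hilbertIdeal (glPow ρ m) := by
    simp_rw [← map_smul, ← map_sum, hsum, Ideal.Quotient.mkₐ_eq_mk] at hg
    exact Ideal.Quotient.eq_zero_iff_mem.1 hg
  obtain ⟨hnone, hfix⟩ := eq_zero_and_vecMul_eq_of_mem_fixedDifferentialIdeal
    (hilbertIdeal_le_fixedDifferentialIdeal (glPow ρ m) σ hmem)
  rw [glPow_apply, vecMul_blockDiagonal_const _ (fun k => g (some k))] at hfix
  obtain ⟨b, hb⟩ := Function.ne_iff.1 hu
  rintro (_ | k)
  · exact hnone
  · exact (mul_eq_mul_left_iff.1 (congrFun hfix (b, k))).resolve_left hb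

end Powers

/-- For a non-trivial `G`-module `V`, the dimension of the vector
coinvariants grows unboundedly: `lim_{m→∞} dim_F F[V^m]_G = ∞`. -/
theorem coinvDim_glPow_tendsto_atTop [Fintype G] (ρ : G →* (Matrix ι ι F)ˣ)
    (hnontrivial : ∃ σ : G, ρ σ ≠ 1) :
    Filter.Tendsto (fun m : ℕ => coinvDim (glPow ρ m)) Filter.atTop Filter.atTop := by
  obtain ⟨σ, hσ⟩ := hnontrivial
  obtain ⟨u, hu⟩ := exists_vecMul_ne_self (Units.val_eq_one.not.2 hσ)
  refine Filter.tendsto_atTop_mono (fun m => ?_) (Filter.tendsto_add_atTop_nat 1)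
  have := finiteDimensional_coinvariants (glPow ρ m)
  simpa [coinvDim] using (linearIndependent_mkₐ_one_and_copies ρ hu m).fintype_card_le_finrank
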